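/- arXiv:2502.05607 — 2 statements merged into one kernel-verified Lean document; each statement's English description precedes it below -/
import Mathlib

section
/- For positive integers a and n, (2a+3)/((2n+1)(2a+1) − 1) = 1/(2n+1) + 1/((2n+1)a + n) + 1/((2n+1)·((2n+1)(2a+1) − 1)). -/
theorem stmt_10 (a n : ℕ) (ha : 0 < a) (hn : 0 < n) :
    ((2 * a + 3 : ℕ) : ℚ) / ((2 * n + 1) * (2 * a + 1) - 1 : ℕ) =
      1 / ((2 * n + 1 : ℕ) : ℚ) + 1 / (((2 * n + 1) * a + n : ℕ) : ℚ) +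
      1 / (((2 * n + 1) * ((2 * n + 1) * (2 * a + 1) - 1) : ℕ) : ℚ) := by
  have h1 : (2 * n + 1) * (2 * a + 1) - 1 = 2 * ((2 * n + 1) * a + n) := by
    cases n <;> ring_nf <;> omega
  rw [h1]
  have h2 : (0 : ℚ) < ((2 * n + 1) * a + n : ℕ) := by positivity
  have h3 : (0 : ℚ) < ((2 * n + 1 : ℕ) : ℚ) := by positivity
  push_cast
  field_simp
  ring
end

section
/- If q + 1 is a practical number (every positive integer less than q+1 is a sum of distinct divisors of q+1) and 1 < p < q, then p/q can be written as Σᵢ (1/kᵢ + 1/(kᵢ·q)) where p = Σᵢ sᵢ with sᵢ distinct divisors of q+1 and kᵢ·sᵢ = q+1. -/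
theorem stmt_17 (q : ℕ) (p : ℕ) (hp : 1 < p) (hpq : p < q)
    (hpractical : ∀ m : ℕ, 0 < m → m < q + 1 →
      ∃ S : Finset ℕ, (∀ d ∈ S, d ∣ q + 1) ∧ ∑ d ∈ S, d = m) :
    ∃ (ℓ : ℕ) (s k : Fin ℓ → ℕ), Function.Injective s ∧
      (∀ i, s i ∣ q + 1) ∧ (∀ i, k i * s i = q + 1) ∧ p = ∑ i, s i ∧
      (p : ℚ) / q = ∑ i, ((1 : ℚ) / k i + 1 / (k i * q)) := by
  obtain ⟨S, hSdvd, hSsum⟩ := hpractical p (by omega) (by omega)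
  set e := S.equivFin.symm
  have hsum' : ∑ i : Fin S.card, ((e i : ℕ) : ℚ) = (p : ℚ) := by
    rw [Fintype.sum_equiv e (fun i => ((e i : ℕ) : ℚ)) (fun x : S => ((x : ℕ) : ℚ))
      (fun i => rfl), Finset.sum_coe_sort S (fun x => (x : ℚ)), ← hSsum]
    push_cast; rfl
  refine ⟨S.card, fun i => (e i : ℕ), fun i => (q + 1) / (e i : ℕ), ?_, ?_, ?_, ?_, ?_⟩
  · intro a b hab
    exact e.injective (Subtype.ext hab)
  · intro i; exact hSdvd _ (e i).2
  · intro i; exact Nat.div_mul_cancel (hSdvd _ (e i).2)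
  · exact_mod_cast hsum'.symm
  · have hq : (q : ℚ) ≠ 0 := by
      have : 0 < q := by omega
      exact_mod_cast this.ne'
    have hterm : ∀ i : Fin S.card,
        ((1 : ℚ) / ((q + 1) / (e i : ℕ) : ℕ) + 1 / (((q + 1) / (e i : ℕ) : ℕ) * q))
          = ((e i : ℕ) : ℚ) / q := by
      intro i
      have hd := hSdvd _ (e i).2
      have hk : ((q + 1) / (e i : ℕ)) * (e i : ℕ) = q + 1 := Nat.div_mul_cancel hd
      have hk0 : ((q + 1) / (e i : ℕ)) ≠ 0 := by
        intro h; rw [h] at hk; simp at hk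
      have hkQ : (((q + 1) / (e i : ℕ) : ℕ) : ℚ) ≠ 0 := Nat.cast_ne_zero.mpr hk0
      have hcast : (((q + 1) / (e i : ℕ) : ℕ) : ℚ) * ((e i : ℕ) : ℚ) = (q : ℚ) + 1 := by
        exact_mod_cast congrArg (Nat.cast : ℕ → ℚ) hk
      have h1 : ((1 : ℚ) / ((q + 1) / (e i : ℕ) : ℕ) + 1 / (((q + 1) / (e i : ℕ) : ℕ) * q))
          = ((q : ℚ) + 1) / ((((q + 1) / (e i : ℕ) : ℕ) : ℚ) * q) := by
        field_simp
      rw [h1, ← hcast, mul_div_mul_left _ _ hkQ]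
    rw [Finset.sum_congr rfl (fun i _ => hterm i), ← Finset.sum_div, hsum']
end
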